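/- Let H be a hereditary and union-closed class of graphs, let G be a graph with htw(G) ≤ k, let X be an H-deletion set in G, and let S ⊆ V(G) be a set of size 3k+4. Then at least one of the following holds: (1) there is a partition S = S_A ∪ S_B into disjoint parts with |S_A| ≤ 2k+2, |S_B| ≤ 2k+2 and λ_G(S_A,S_B) ≤ k+1; (2) there exists S' ⊆ S with |S'| = 2k+3 and λ_G(S',X) ≤ 2k+2; (3) there exists X' ⊆ X with |X'| = 2k+3 that is redundant in X. -/

import Mathlib

/-! Common definitions: rooted trees, graph classes, tree H-decompositions,
H-treewidth, separators, separations, (H,ℓ)-separations, deletion sets. -/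

/-- A (finite) rooted tree, encoded by a finite node type together with a parent
function under which every node eventually reaches the root. -/
structure RTree : Type 1 where
  ι : Type
  fin : Fintype ι
  root : ι
  parent : ι → ι
  parent_root : parent root = root
  wf : ∀ t : ι, ∃ n : ℕ, parent^[n] t = root

/-- The undirected graph underlying a rooted tree. -/
def RTree.graph (T : RTree) : SimpleGraph T.ι where
  Adj s t := s ≠ t ∧ (T.parent s = t ∨ T.parent t = s)
  symm := ⟨fun _ _ h => ⟨Ne.symm h.1, h.2.symm⟩⟩
  loopless := ⟨fun _ h => h.1 rfl⟩

/-- A leaf of a rooted tree: a node with no children. -/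
def RTree.IsLeaf (T : RTree) (t : T.ι) : Prop :=
  ∀ u : T.ι, T.parent u = t → u = t

/-- A class of (simple) graphs. -/
abbrev GraphClass : Type 1 := ∀ {α : Type}, SimpleGraph α → Prop

/-- A graph class is hereditary if it is closed under (isomorphic copies of)
induced subgraphs, i.e. closed under graph embeddings. -/
def Hereditary (H : GraphClass) : Prop :=
  ∀ {α β : Type} (G : SimpleGraph α) (G' : SimpleGraph β), H G → (G' ↪g G) → H G'

/-- A graph class is union-closed if it is closed under disjoint unions. -/
def UnionClosed (H : GraphClass) : Prop :=
  ∀ {α β : Type} (G₁ : SimpleGraph α) (G₂ : SimpleGraph β),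
    H G₁ → H G₂ → H (G₁ ⊕g G₂)

/-- The graph class `H` contains the graph with no vertices. -/
def ContainsNullGraph (H : GraphClass) : Prop :=
  ∀ (α : Type), IsEmpty α → ∀ G : SimpleGraph α, H G

variable {V : Type}

/-- `X` is an `H`-deletion set in `G` if `G - X` belongs to `H`. -/
def IsDeletionSet (H : GraphClass) (G : SimpleGraph V) (X : Set V) : Prop :=
  H (G.induce Xᶜ)

/-- `P` is an `(X,Y)`-separator in `G`: every walk from a vertex of `X` to a
vertex of `Y` contains a vertex of `P` (`P` may intersect `X ∪ Y`). -/
def IsSeparator (G : SimpleGraph V) (X Y P : Set V) : Prop :=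
  ∀ ⦃x y : V⦄, x ∈ X → y ∈ Y → ∀ p : G.Walk x y, ∃ v ∈ p.support, v ∈ P

/-- `λ_G(X,Y)`: the minimum size of an `(X,Y)`-separator in `G`. -/
noncomputable def lam (G : SimpleGraph V) (X Y : Set V) : ℕ :=
  sInf {n : ℕ | ∃ P : Set V, IsSeparator G X Y P ∧ P.ncard = n}

/-- `(A,B)` is a separation of `G`: `A ∪ B = V(G)` and there is no edge
between `A \ B` and `B \ A`. -/
def IsSeparation (G : SimpleGraph V) (A B : Set V) : Prop :=
  A ∪ B = Set.univ ∧ ∀ a ∈ A \ B, ∀ b ∈ B \ A, ¬ G.Adj a b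

/-- `(C,S)` is an `(H,ℓ)`-separation in `G`: `C` and `S` are disjoint,
`G[C] ∈ H`, `|S| ≤ ℓ` and `N_G(C) ⊆ S`. -/
def IsHSeparation (H : GraphClass) (G : SimpleGraph V) (ℓ : ℕ) (C S : Set V) : Prop :=
  Disjoint C S ∧ H (G.induce C) ∧ S.ncard ≤ ℓ ∧
    ∀ v ∈ C, ∀ u : V, G.Adj v u → u ∉ C → u ∈ S

/-- The separation `(C,S)` weakly covers `Z` if `Z ⊆ C ∪ S`. -/
def WeaklyCovers (C S Z : Set V) : Prop := Z ⊆ C ∪ S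

/-- `Z` is weakly `(H,ℓ)`-separable if some `(H,ℓ)`-separation weakly covers it. -/
def WeaklySeparable (H : GraphClass) (G : SimpleGraph V) (ℓ : ℕ) (Z : Set V) : Prop :=
  ∃ C S : Set V, IsHSeparation H G ℓ C S ∧ WeaklyCovers C S Z

/-- A subset `X'` of an `H`-deletion set `X` is redundant in `X` if it can be
replaced by a strictly smaller set. -/
def Redundant (H : GraphClass) (G : SimpleGraph V) (X X' : Set V) : Prop :=
  ∃ X'' : Set V, X''.ncard < X'.ncard ∧ IsDeletionSet H G ((X \ X') ∪ X'')

/-- The data `(T, χ, L)` of a candidate tree `H`-decomposition. -/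
structure PreDecomp (V : Type) : Type 1 where
  T : RTree
  χ : T.ι → Set V
  L : Set V

/-- `D = (T,χ,L)` is a tree `H`-decomposition of the subgraph of `G` induced by `W`:
(0) all bags and `L` are contained in `W`;
(1) for each `v ∈ W` the nodes whose bag contains `v` form a nonempty connected subtree;
(2) every edge of `G[W]` is contained in some bag;
(3) every `v ∈ L` is in a unique bag, which is at a leaf;
(4) for every node `t`, `G[χ(t) ∩ L] ∈ H`. -/
def IsTreeHDecompOn (H : GraphClass) (G : SimpleGraph V) (W : Set V) (D : PreDecomp V) : Prop :=
  (∀ t, D.χ t ⊆ W) ∧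
  D.L ⊆ W ∧
  (∀ v ∈ W, ((D.T.graph).induce {t | v ∈ D.χ t}).Connected) ∧
  (∀ u v : V, u ∈ W → v ∈ W → G.Adj u v → ∃ t, u ∈ D.χ t ∧ v ∈ D.χ t) ∧
  (∀ v ∈ D.L, ∃! t, v ∈ D.χ t) ∧
  (∀ v ∈ D.L, ∀ t, v ∈ D.χ t → D.T.IsLeaf t) ∧
  (∀ t, H (G.induce (D.χ t ∩ D.L)))

/-- `D` is a tree `H`-decomposition of `G`. -/
def IsTreeHDecomp (H : GraphClass) (G : SimpleGraph V) (D : PreDecomp V) : Prop :=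
  IsTreeHDecompOn H G Set.univ D

/-- The width of `(T,χ,L)`: `max(0, max_t |χ(t) \ L| - 1)`. -/
noncomputable def PreDecomp.width (D : PreDecomp V) : ℕ :=
  sSup (Set.range fun t => (D.χ t \ D.L).ncard) - 1

/-- The `H`-treewidth of `G`: the minimum width of a tree `H`-decomposition of `G`. -/
noncomputable def htw (H : GraphClass) (G : SimpleGraph V) : ℕ :=
  sInf {n : ℕ | ∃ D : PreDecomp V, IsTreeHDecomp H G D ∧ D.width = n}

/-- The class of all graphs. -/
def TrivialClass : GraphClass := fun {_} _ => True

/-- A standard tree decomposition: a tree `H`-decomposition with `L = ∅`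
(the choice of `H` is then irrelevant). -/
def IsTreeDecomp (G : SimpleGraph V) (D : PreDecomp V) : Prop :=
  IsTreeHDecomp TrivialClass G D ∧ D.L = ∅

/-- The treewidth of `G`. -/
noncomputable def tw (G : SimpleGraph V) : ℕ :=
  sInf {n : ℕ | ∃ D : PreDecomp V, IsTreeDecomp G D ∧ D.width = n}

/-!
Take a tree `H`-decomposition of width at most `k` and a node `t` that is a centroid for `S`:
each child subtree of `t` carries at most `k + 1` vertices of `S` and the rest of the tree at
most `2k + 2`. Let `B = χ(t) \ L` (at most `k + 1` vertices) and `C = χ(t) ∩ L`; since vertices of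
`L` live in a single bag, every neighbour of `C` lies in `B ∪ C`.

If `χ(t)` contains at most `2k + 2` vertices of `S`, then each component of `G - B` meets `S` in
at most `2k + 2` vertices (it lies in `C` or in one branch of `T - t`), and grouping components
gives the balanced split, separated by `B`. Otherwise pick `S' ⊆ S ∩ χ(t)`: if `|X ∩ C| ≤ k + 1`
then `B ∪ (X ∩ C)` separates `S'` from `X`; if not, `G[C] ∈ H` and `C` is cut off by `B`, so
`X' ⊇ X ∩ C` can be traded for `B ∪ (X' \ C)`.
-/

open Set

theorem SimpleGraph.Walk.apply_eq_of_adj {W β : Type*} {G : SimpleGraph W} {f : W → β}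
    (hf : ∀ ⦃u v⦄, G.Adj u v → f u = f v) {x y : W} (p : G.Walk x y) : f x = f y := by
  induction p with
  | nil => rfl
  | cons h _ ih => exact (hf h).trans ih

theorem exists_ncard_inter_preimage_mem_Icc {α β : Type*} (f : α → β) {S : Set α}
    (hS : S.Finite) {l u : ℕ} (hlu : 2 * l ≤ u + 2) (hl : l ≤ S.ncard)
    (hfib : ∀ b, (S ∩ f ⁻¹' {b}).ncard ≤ u) :
    ∃ B : Set β, (S ∩ f ⁻¹' B).ncard ∈ Icc l u := by
  have hfin : ∀ B : Set β, (S ∩ f ⁻¹' B).Finite := fun _ => hS.inter_of_left _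
  obtain ⟨B, hB, hmin⟩ := (measure fun B : Set β => (S ∩ f ⁻¹' B).ncard).wf.has_min
    {B | l ≤ (S ∩ f ⁻¹' B).ncard} ⟨univ, by simpa using hl⟩
  refine ⟨B, hB, not_lt.1 fun hBu => ?_⟩
  obtain ⟨a, haS, haB⟩ : (S ∩ f ⁻¹' B).Nonempty := nonempty_of_ncard_ne_zero (by omega)
  by_cases hfa : l ≤ (S ∩ f ⁻¹' {f a}).ncard
  · exact hmin {f a} hfa (show (S ∩ f ⁻¹' {f a}).ncard < (S ∩ f ⁻¹' B).ncard by
      have := hfib (f a); omega)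
  -- the fiber of `f a` is smaller than `l`, so removing it from `B` keeps at least `l` elements
  have hsplit : S ∩ f ⁻¹' (B \ {f a}) = (S ∩ f ⁻¹' B) \ (S ∩ f ⁻¹' {f a}) := by
    ext x; simp only [mem_inter_iff, mem_preimage, mem_sdiff, mem_singleton_iff]; tauto
  have hsub : S ∩ f ⁻¹' {f a} ⊆ S ∩ f ⁻¹' B := fun x ⟨hx, hfx⟩ => ⟨hx, by simp_all⟩
  have hcard := ncard_sdiff hsub (hfin _)
  have hpos : 0 < (S ∩ f ⁻¹' {f a}).ncard := (ncard_pos (hfin _)).2 ⟨a, haS, rfl⟩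
  exact hmin (B \ {f a}) (show l ≤ _ by rw [hsplit, hcard]; omega)
    (show (S ∩ f ⁻¹' (B \ {f a})).ncard < (S ∩ f ⁻¹' B).ncard by rw [hsplit, hcard]; omega)

section Separators

variable {G : SimpleGraph V}

theorem lam_le_ncard {X Y P : Set V} (h : IsSeparator G X Y P) : lam G X Y ≤ P.ncard :=
  Nat.sInf_le ⟨P, h, rfl⟩

theorem isSeparator_right (G : SimpleGraph V) (X Y : Set V) : IsSeparator G X Y Y :=
  fun _ _ _ hy p => ⟨_, p.end_mem_support, hy⟩

theorem isSeparator_of_apply_ne {β : Type*} (f : V → β) {X Y P : Set V}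
    (hf : ∀ ⦃u v⦄, u ∉ P → v ∉ P → G.Adj u v → f u = f v)
    (hXY : ∀ x ∈ X, ∀ y ∈ Y, f x ≠ f y) : IsSeparator G X Y P := by
  intro x y hx hy p
  by_contra! hp
  exact hXY x hx y hy ((p.induce Pᶜ hp).apply_eq_of_adj (f := f ∘ Subtype.val)
    fun u v huv => hf u.2 v.2 huv)

theorem isSeparator_of_neighbor_subset {B C Y Z : Set V}
    (hN : ∀ v ∈ C, ∀ u, G.Adj v u → u ∈ C ∪ B) (hZ : Z ⊆ C ∪ B) :
    IsSeparator G Z Y (B ∪ (Y ∩ C)) := by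
  intro x y hx hy p
  replace hx := hZ hx
  induction p with
  | nil =>
    exact ⟨_, SimpleGraph.Walk.start_mem_support _, hx.elim (fun hC => Or.inr ⟨hy, hC⟩) Or.inl⟩
  | cons hadj q ih =>
    rcases hx with hC | hB
    · obtain ⟨v, hv, hvP⟩ := ih hy (hN _ hC _ hadj)
      exact ⟨v, by simp [hv], hvP⟩
    · exact ⟨_, (SimpleGraph.Walk.cons hadj q).start_mem_support, Or.inl hB⟩

theorem exists_split_lam_le [Finite V] {β : Type*} (f : V → β) {P S : Set V} {l u : ℕ}
    (hlu : 2 * l ≤ u + 2) (hl : l ≤ S.ncard) (hS : S.ncard ≤ u + l)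
    (hfib : ∀ b, (S ∩ f ⁻¹' {b}).ncard ≤ u)
    (hf : ∀ ⦃x y⦄, x ∉ P → y ∉ P → G.Adj x y → f x = f y) :
    ∃ SA SB : Set V, SA ∪ SB = S ∧ Disjoint SA SB ∧
      SA.ncard ≤ u ∧ SB.ncard ≤ u ∧ lam G SA SB ≤ P.ncard := by
  obtain ⟨B, hlo, hhi⟩ := exists_ncard_inter_preimage_mem_Icc f (toFinite S) hlu hl hfib
  refine ⟨S ∩ f ⁻¹' B, S \ (S ∩ f ⁻¹' B), union_sdiff_cancel inter_subset_left,
    disjoint_sdiff_right, hhi, by rw [ncard_sdiff inter_subset_left]; omega, lam_le_ncard ?_⟩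
  exact isSeparator_of_apply_ne f hf fun x hx y hy hxy =>
    hy.2 ⟨hy.1, show f y ∈ B from hxy ▸ hx.2⟩

end Separators

section DeletionSets

variable {H : GraphClass} {G : SimpleGraph V}

theorem IsDeletionSet.mono (hher : Hereditary H) {X Y : Set V} (hX : IsDeletionSet H G X)
    (hXY : X ⊆ Y) : IsDeletionSet H G Y :=
  hher _ _ hX (G.induceHomOfLE (compl_subset_compl.2 hXY))

theorem IsDeletionSet.sdiff_union (hher : Hereditary H) (hun : UnionClosed H) {X B C : Set V}
    (hX : IsDeletionSet H G X) (hC : H (G.induce C))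
    (hN : ∀ v ∈ C, ∀ u, G.Adj v u → u ∈ C ∪ B) : IsDeletionSet H G ((X \ C) ∪ B) := by
  classical
  have hXc : ∀ z : ↥((X \ C) ∪ B)ᶜ, z.1 ∉ C → z.1 ∈ Xᶜ :=
    fun z hzC hzX => z.2 (Or.inl ⟨hzX, hzC⟩)
  -- no edge leaves `C` inside `G - ((X \ C) ∪ B)`, so it embeds into `G[C] ⊕ G[V \ X]`
  have hcut : ∀ z w : ↥((X \ C) ∪ B)ᶜ, z.1 ∈ C → w.1 ∉ C → ¬ G.Adj z w := fun z w hz hw hzw =>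
    w.2 (Or.inr ((hN z hz w hzw).resolve_left hw))
  let φ : ↥((X \ C) ∪ B)ᶜ → C ⊕ ↥Xᶜ :=
    fun z => if h : z.1 ∈ C then .inl ⟨z, h⟩ else .inr ⟨z, hXc z h⟩
  have hinj : φ.Injective := fun z w hzw => by
    by_cases hz : z.1 ∈ C <;> by_cases hw : w.1 ∈ C <;>
      simp only [φ, hz, hw, ↓reduceDIte, Sum.inl.injEq, Sum.inr.injEq, Subtype.mk.injEq,
        reduceCtorEq] at hzw <;>
      exact Subtype.ext hzw
  have hadj : ∀ {z w}, (G.induce C ⊕g G.induce Xᶜ).Adj (φ z) (φ w) ↔ G.Adj z w := fun {z w} => by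
    by_cases hz : z.1 ∈ C <;> by_cases hw : w.1 ∈ C <;>
      simp only [φ, hz, hw, ↓reduceDIte, SimpleGraph.sum_adj, SimpleGraph.comap_adj,
        Function.Embedding.subtype_apply, false_iff]
    · exact hcut z w hz hw
    · exact fun h => hcut w z hw hz h.symm
  exact hher _ _ (hun _ _ hC hX) ⟨⟨φ, hinj⟩, hadj⟩

theorem exists_redundant_of_neighbor_subset [Finite V] (hher : Hereditary H)
    (hun : UnionClosed H) {X B C : Set V} (hX : IsDeletionSet H G X) (hC : H (G.induce C))
    (hN : ∀ v ∈ C, ∀ u, G.Adj v u → u ∈ C ∪ B) {m : ℕ} (hmX : m ≤ X.ncard)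
    (hBm : B.ncard < m) (hBC : B.ncard < (X ∩ C).ncard) :
    ∃ X' ⊆ X, X'.ncard = m ∧ Redundant H G X X' := by
  obtain ⟨X₁, hX₁, hX₁card⟩ := exists_subset_card_eq (min_le_right m (X ∩ C).ncard)
  obtain ⟨X', hX₁X', hX'X, hX'card⟩ :=
    exists_subsuperset_card_eq (hX₁.trans inter_subset_left) (hX₁card ▸ min_le_left _ _) hmX
  refine ⟨X', hX'X, hX'card, B ∪ (X' \ C), ?_, ?_⟩
  · have h₁ : X₁.ncard ≤ (X' ∩ C).ncard :=
      ncard_le_ncard (subset_inter hX₁X' (hX₁.trans inter_subset_right))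
    have h₂ := ncard_inter_add_ncard_sdiff_eq_ncard X' C
    have h₃ := ncard_union_le B (X' \ C)
    omega
  · refine (hX.sdiff_union hher hun hC hN).mono hher ?_
    rintro x (⟨hxX, hxC⟩ | hxB)
    · by_cases hxX' : x ∈ X'
      · exact Or.inr (Or.inr ⟨hxX', hxC⟩)
      · exact Or.inl ⟨hxX, hxX'⟩
    · exact Or.inr (Or.inl hxB)

end DeletionSets

namespace RTree

abbrev unit : RTree where
  ι := Unit
  fin := inferInstance
  root := ()
  parent := id
  parent_root := rfl
  wf _ := ⟨0, rfl⟩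

variable (T : RTree)

def IsDescendant (u a : T.ι) : Prop := ∃ n, T.parent^[n] u = a

/-- A subsingleton, taken as a set to avoid choosing its element. -/
def branch (t u : T.ι) : Set T.ι := {c | T.parent c = t ∧ c ≠ t ∧ T.IsDescendant u c}

variable {T}

theorem isDescendant_root (u : T.ι) : T.IsDescendant u T.root := T.wf u

theorem IsDescendant.of_parent_eq {u c t : T.ι} (hu : T.IsDescendant u c)
    (h : T.parent c = t) : T.IsDescendant u t := by
  obtain ⟨n, hn⟩ := hu
  exact ⟨n + 1, by rw [Function.iterate_succ_apply', hn, h]⟩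

theorem eq_root_of_isPeriodicPt {a : T.ι} {m : ℕ} (hm : 0 < m)
    (h : Function.IsPeriodicPt T.parent m a) : a = T.root := by
  obtain ⟨N, hN⟩ := T.wf a
  calc a = T.parent^[N * m] a := (h.const_mul N).eq.symm
    _ = T.parent^[N * m - N] (T.parent^[N] a) := by
      rw [← Function.iterate_add_apply, Nat.sub_add_cancel (Nat.le_mul_of_pos_right N hm)]
    _ = T.root := by rw [hN, Function.iterate_fixed T.parent_root]

theorem not_isDescendant_of_parent_eq {c t : T.ι} (h : T.parent c = t) (hc : c ≠ t) :
    ¬ T.IsDescendant t c := by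
  rintro ⟨j, hj⟩
  have ht : t = T.root := eq_root_of_isPeriodicPt j.succ_pos
    (by rw [Function.IsPeriodicPt, Function.IsFixedPt, Function.iterate_succ_apply', hj, h])
  rw [ht, Function.iterate_fixed T.parent_root] at hj
  exact hc (hj.symm.trans ht.symm)

theorem branch_eq_of_parent_eq {t u v : T.ι} (hv : v ≠ t) (h : T.parent u = v) :
    T.branch t u = T.branch t v := by
  ext c
  refine and_congr_right fun hc => and_congr_right fun _ => ⟨?_, fun ⟨n, hn⟩ => ⟨n + 1, by
    rwa [Function.iterate_succ_apply, h]⟩⟩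
  rintro ⟨_ | n, hn⟩
  · subst hn
    exact absurd (h.symm.trans hc) hv
  · exact ⟨n, by rwa [Function.iterate_succ_apply, h] at hn⟩

theorem branch_eq_of_adj {t u v : T.ι} (hu : u ≠ t) (hv : v ≠ t) (h : T.graph.Adj u v) :
    T.branch t u = T.branch t v :=
  h.2.elim (branch_eq_of_parent_eq hv) fun h => (branch_eq_of_parent_eq hu h).symm

theorem branch_eq_of_connected {t a b : T.ι} {N : Set T.ι} (hN : (T.graph.induce N).Connected)
    (ht : t ∉ N) (ha : a ∈ N) (hb : b ∈ N) : T.branch t a = T.branch t b := by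
  obtain ⟨p⟩ := hN.preconnected ⟨a, ha⟩ ⟨b, hb⟩
  exact p.apply_eq_of_adj (f := fun x : N => T.branch t x) fun x y hxy =>
    branch_eq_of_adj (ne_of_mem_of_not_mem x.2 ht) (ne_of_mem_of_not_mem y.2 ht) hxy

theorem not_isDescendant_of_branch_eq_empty {t u : T.ι} (hu : u ≠ t) (h : T.branch t u = ∅) :
    ¬ T.IsDescendant u t := by
  classical
  intro hdesc
  obtain ⟨n, hn, hmin⟩ : ∃ n, T.parent^[n] u = t ∧ ∀ m < n, T.parent^[m] u ≠ t :=
    ⟨Nat.find hdesc, Nat.find_spec hdesc, fun _ => Nat.find_min hdesc⟩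
  obtain _ | m := n
  · exact hu hn
  have hmem : T.parent^[m] u ∈ T.branch t u :=
    ⟨by rwa [← Function.iterate_succ_apply' T.parent], hmin m m.lt_succ_self, m, rfl⟩
  rw [h] at hmem
  exact hmem

theorem exists_centroid {α : Type*} (T : RTree) (g : α → T.ι) {S : Set α} (hS : S.Finite)
    {l : ℕ} (hl : l ≤ S.ncard) :
    ∃ t, (∀ c, T.parent c = t → c ≠ t → {s ∈ S | T.IsDescendant (g s) c}.ncard < l) ∧
      {s ∈ S | ¬ T.IsDescendant (g s) t}.ncard + l ≤ S.ncard := by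
  have := T.fin
  obtain ⟨t, ht, hmin⟩ := exists_min_image {t | l ≤ {s ∈ S | T.IsDescendant (g s) t}.ncard}
    (fun t => {u | T.IsDescendant u t}.ncard) (toFinite _)
    ⟨T.root, by simpa [isDescendant_root] using hl⟩
  refine ⟨t, fun c hc hct => not_le.1 fun hlc => ?_, ?_⟩
  · have hsub : {u | T.IsDescendant u c} ⊂ {u | T.IsDescendant u t} :=
      ⟨fun u hu => hu.of_parent_eq hc, fun h => not_isDescendant_of_parent_eq hc hct (h ⟨0, rfl⟩)⟩
    exact (hmin c hlc).not_gt (ncard_lt_ncard hsub)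
  · have := ncard_inter_add_ncard_sdiff_eq_ncard S {s | T.IsDescendant (g s) t} hS
    have ht : l ≤ (S ∩ {s | T.IsDescendant (g s) t}).ncard := ht
    change (S \ {s | T.IsDescendant (g s) t}).ncard + l ≤ S.ncard
    omega

end RTree

section Decompositions

variable {H : GraphClass} {G : SimpleGraph V} {D : PreDecomp V}

theorem exists_isTreeHDecomp_width_le {X : Set V} {k : ℕ} (hX : IsDeletionSet H G X)
    (hk : htw H G ≤ k) : ∃ D : PreDecomp V, IsTreeHDecomp H G D ∧ D.width ≤ k := by
  -- the single bag `V` with `L = V \ X` shows that `htw` is not the junk value of `sInf ∅`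
  have hne : ∃ D : PreDecomp V, IsTreeHDecomp H G D :=
    ⟨⟨RTree.unit, fun _ => univ, Xᶜ⟩, fun _ => subset_univ _, subset_univ _,
      fun _ _ => @SimpleGraph.Connected.of_subsingleton _ _ ⟨⟨(), trivial⟩⟩ _,
      fun _ _ _ _ _ => ⟨(), trivial, trivial⟩, fun _ _ => ⟨(), trivial, fun _ _ => rfl⟩,
      fun _ _ _ _ _ _ => rfl, fun _ => by rw [univ_inter]; exact hX⟩
  obtain ⟨D₀, hD₀⟩ := hne
  obtain ⟨D, hD, hDw⟩ := Nat.sInf_mem (⟨_, D₀, hD₀, rfl⟩ :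
    {n | ∃ D : PreDecomp V, IsTreeHDecomp H G D ∧ D.width = n}.Nonempty)
  exact ⟨D, hD, hDw.trans_le hk⟩

theorem PreDecomp.ncard_bag_sdiff_le [Finite V] (D : PreDecomp V) (t : D.T.ι) :
    (D.χ t \ D.L).ncard ≤ D.width + 1 := by
  have : (D.χ t \ D.L).ncard ≤ sSup (range fun s => (D.χ s \ D.L).ncard) :=
    le_csSup ⟨Nat.card V, by rintro _ ⟨s, rfl⟩; exact ncard_le_card _⟩ ⟨t, rfl⟩
  unfold PreDecomp.width
  omega

namespace IsTreeHDecomp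

theorem exists_mem_bag (hD : IsTreeHDecomp H G D) (v : V) : ∃ t, v ∈ D.χ t := by
  obtain ⟨⟨t, ht⟩⟩ := (hD.2.2.1 v trivial).nonempty
  exact ⟨t, ht⟩

theorem mem_bag_of_adj (hD : IsTreeHDecomp H G D) {t : D.T.ι} {u v : V} (hvL : v ∈ D.L)
    (hvt : v ∈ D.χ t) (hadj : G.Adj v u) : u ∈ D.χ t := by
  obtain ⟨s, hvs, hus⟩ := hD.2.2.2.1 v u trivial trivial hadj
  obtain ⟨_, -, huniq⟩ := hD.2.2.2.2.1 v hvL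
  rwa [(huniq s hvs).trans (huniq t hvt).symm] at hus

theorem branch_eq_of_mem_bag (hD : IsTreeHDecomp H G D) {t a b : D.T.ι} {v : V}
    (hvt : v ∉ D.χ t) (ha : v ∈ D.χ a) (hb : v ∈ D.χ b) : D.T.branch t a = D.T.branch t b :=
  RTree.branch_eq_of_connected (hD.2.2.1 v trivial) hvt ha hb

end IsTreeHDecomp

open Classical in
noncomputable def PreDecomp.side (D : PreDecomp V) (nod : V → D.T.ι) (t : D.T.ι) (v : V) :
    Option (Set D.T.ι) :=
  if v ∈ D.χ t then none else some (D.T.branch t (nod v))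

variable {nod : V → D.T.ι}

theorem IsTreeHDecomp.side_eq_of_adj (hD : IsTreeHDecomp H G D) (hnod : ∀ v, v ∈ D.χ (nod v))
    (t : D.T.ι) ⦃u v : V⦄ (hu : u ∉ D.χ t \ D.L) (hv : v ∉ D.χ t \ D.L) (huv : G.Adj u v) :
    D.side nod t u = D.side nod t v := by
  by_cases hut : u ∈ D.χ t
  · have hvt := hD.mem_bag_of_adj (not_not.1 fun h => hu ⟨hut, h⟩) hut huv
    simp [PreDecomp.side, hut, hvt]
  by_cases hvt : v ∈ D.χ t
  · exact absurd (hD.mem_bag_of_adj (not_not.1 fun h => hv ⟨hvt, h⟩) hvt huv.symm) hut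
  obtain ⟨s, hus, hvs⟩ := hD.2.2.2.1 u v trivial trivial huv
  simp only [PreDecomp.side, hut, hvt, if_false, Option.some.injEq]
  exact (hD.branch_eq_of_mem_bag hut (hnod u) hus).trans (hD.branch_eq_of_mem_bag hvt hvs (hnod v))

theorem ncard_side_fiber_le [Finite V] (hnod : ∀ v, v ∈ D.χ (nod v)) {S : Set V} {t : D.T.ι}
    {u : ℕ} (hbag : (S ∩ D.χ t).ncard ≤ u)
    (hchild : ∀ c, D.T.parent c = t → c ≠ t → {s ∈ S | D.T.IsDescendant (nod s) c}.ncard ≤ u)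
    (hout : {s ∈ S | ¬ D.T.IsDescendant (nod s) t}.ncard ≤ u) (b : Option (Set D.T.ι)) :
    (S ∩ D.side nod t ⁻¹' {b}).ncard ≤ u := by
  have hsome : ∀ {v Q}, D.side nod t v = some Q → v ∉ D.χ t ∧ D.T.branch t (nod v) = Q := by
    intro v Q h
    unfold PreDecomp.side at h
    split_ifs at h with hv
    exact ⟨hv, Option.some_injective _ h⟩
  rcases b with _ | Q
  · refine (ncard_le_ncard (?_ : _ ⊆ S ∩ D.χ t)).trans hbag
    rintro s ⟨hs, hside⟩
    refine ⟨hs, not_not.1 fun hst => ?_⟩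
    simp [PreDecomp.side, hst] at hside
  rcases (S ∩ D.side nod t ⁻¹' {some Q}).eq_empty_or_nonempty with h | ⟨s₀, -, hs₀⟩
  · simp [h]
  obtain ⟨-, rfl⟩ := hsome hs₀
  rcases (D.T.branch t (nod s₀)).eq_empty_or_nonempty with hQ | ⟨c, hc⟩
  · refine (ncard_le_ncard (?_ : _ ⊆ {s ∈ S | ¬ D.T.IsDescendant (nod s) t})).trans hout
    rintro s ⟨hs, hside⟩
    obtain ⟨hst, hbr⟩ := hsome hside
    exact ⟨hs, RTree.not_isDescendant_of_branch_eq_empty (fun h => hst (h ▸ hnod s))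
      (hbr.trans hQ)⟩
  · obtain ⟨hct, hne, -⟩ := id hc
    refine (ncard_le_ncard (?_ : _ ⊆ {s ∈ S | D.T.IsDescendant (nod s) c})).trans
      (hchild c hct hne)
    rintro s ⟨hs, hside⟩
    obtain ⟨-, hbr⟩ := hsome hside
    rw [← hbr] at hc
    exact ⟨hs, hc.2.2⟩

end Decompositions

/-- if `htw(G) ≤ k`, `X` is an `H`-deletion set and `|S| = 3k+4`,
then `S` has a balanced split with a small separator, or some `S' ⊆ S` of size
`2k+3` has `λ_G(S',X) ≤ 2k+2`, or some `X' ⊆ X` of size `2k+3` is redundant in `X`. -/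
theorem split_or_base_or_redundant {V : Type} [Fintype V] (H : GraphClass)
    (hher : Hereditary H) (hun : UnionClosed H)
    (G : SimpleGraph V) (k : ℕ) (hk : htw H G ≤ k)
    (X : Set V) (hX : IsDeletionSet H G X)
    (S : Set V) (hS : S.ncard = 3 * k + 4) :
    (∃ SA SB : Set V, SA ∪ SB = S ∧ Disjoint SA SB ∧
      SA.ncard ≤ 2 * k + 2 ∧ SB.ncard ≤ 2 * k + 2 ∧ lam G SA SB ≤ k + 1) ∨
    (∃ S' : Set V, S' ⊆ S ∧ S'.ncard = 2 * k + 3 ∧ lam G S' X ≤ 2 * k + 2) ∨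
    (∃ X' : Set V, X' ⊆ X ∧ X'.ncard = 2 * k + 3 ∧ Redundant H G X X') := by
  by_cases hXsmall : X.ncard ≤ 2 * k + 2
  · obtain ⟨S', hS'S, hS'⟩ := exists_subset_card_eq (show 2 * k + 3 ≤ S.ncard by omega)
    exact Or.inr (Or.inl ⟨S', hS'S, hS', (lam_le_ncard (isSeparator_right G S' X)).trans hXsmall⟩)
  obtain ⟨D, hD, hDk⟩ := exists_isTreeHDecomp_width_le hX hk
  choose nod hnod using hD.exists_mem_bag
  obtain ⟨t, hchild, hout⟩ := D.T.exists_centroid nod (toFinite S) (l := k + 2) (by omega)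
  have hB : (D.χ t \ D.L).ncard ≤ k + 1 := (D.ncard_bag_sdiff_le t).trans (by omega)
  have hN : ∀ v ∈ D.χ t ∩ D.L, ∀ u, G.Adj v u → u ∈ (D.χ t ∩ D.L) ∪ (D.χ t \ D.L) :=
    fun v hv u huv => by rw [inter_union_sdiff]; exact hD.mem_bag_of_adj hv.2 hv.1 huv
  by_cases hbig : 2 * k + 3 ≤ (S ∩ D.χ t).ncard
  · by_cases hXC : (X ∩ (D.χ t ∩ D.L)).ncard ≤ k + 1
    · obtain ⟨S', hS'S, hS'⟩ := exists_subset_card_eq hbig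
      have hsep := isSeparator_of_neighbor_subset (Y := X) hN
        (hS'S.trans (by rw [inter_union_sdiff]; exact inter_subset_right))
      exact Or.inr (Or.inl ⟨S', hS'S.trans inter_subset_left, hS',
        (lam_le_ncard hsep).trans ((ncard_union_le _ _).trans (by omega))⟩)
    · exact Or.inr (Or.inr (exists_redundant_of_neighbor_subset hher hun hX
        (hD.2.2.2.2.2.2 t : H (G.induce (D.χ t ∩ D.L))) hN (by omega) (by omega) (by omega)))
  · obtain ⟨SA, SB, hSAB, hdisj, hSA, hSB, hlam⟩ := exists_split_lam_le (D.side nod t)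
      (l := k + 2) (u := 2 * k + 2) (by omega) (by omega) (by omega)
      (ncard_side_fiber_le hnod (by omega) (fun c hc hct => (hchild c hc hct).le.trans (by omega))
        (by omega)) (hD.side_eq_of_adj hnod t)
    exact Or.inl ⟨SA, SB, hSAB, hdisj, hSA, hSB, hlam.trans hB⟩
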